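/- Let X be a proper complete metric space, let f_1, ..., f_N : X → X be continuous maps with Hutchinson operator F, let A be a nonempty compact set with F(A) = A, and let U be an open set with A ⊆ U such that F^k(B) → A in the Hausdorff metric for every nonempty compact B ⊆ U. Fix p ∈ (0, 1/N] and x_0 ∈ U, let σ_1, σ_2, ... : Ω → {1,...,N} be random variables on a probability space such that for every k and n and every event E measurable with respect to σ_1,...,σ_{k-1}, P({σ_k = n} ∩ E) ≥ p · P(E), and define x_k(ω) = f_{σ_k(ω)}(x_{k-1}(ω)). Then, with probability one, ⋂_{K≥1} closure({x_k : k ≥ K}) = A. -/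

import Mathlib

open Metric Filter MeasureTheory
open scoped Topology ENNReal

/-! Every orbit point `x k` lies in `F^[k] {x₀}`, which converges to `A`, so all cluster points
of the orbit lie in `A`. Conversely, the orbit eventually stays in a compact neighbourhood
`C ⊆ U` of `A`. For a ball `G` around a point of `A`, the attractor property and compactness
give finitely many words, of length at most `M`, such that from every point of `C` one of them
leads into `G`. Whatever the past, the selections follow the appropriate word with probability
at least `p ^ M`, so the orbit avoids `G` for `j` consecutive blocks of `M` steps with
probability at most `(1 - p ^ M) ^ j`. Hence almost surely the orbit visits every ball around
points of a countable dense subset of `A` infinitely often, and every point of `A` is a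
cluster point. -/

section WordOrbit

variable {ι X : Type*} (f : ι → X → X)

def wordOrbit (w : ℕ → ι) (y : X) : ℕ → X
  | 0 => y
  | n + 1 => f (w n) (wordOrbit w y n)

variable {f}

theorem wordOrbit_congr {n : ℕ} {w w' : ℕ → ι} (h : ∀ j < n, w j = w' j) (y : X) :
    wordOrbit f w y n = wordOrbit f w' y n := by
  induction n with
  | zero => rfl
  | succ n ih => simp only [wordOrbit, h n n.lt_succ_self, ih fun j hj => h j (by omega)]

theorem wordOrbit_add (w : ℕ → ι) (y : X) (k n : ℕ) :
    wordOrbit f w y (k + n) = wordOrbit f (fun r => w (k + r)) (wordOrbit f w y k) n := by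
  induction n with
  | zero => rfl
  | succ n ih => rw [← add_assoc, wordOrbit, ih]; rfl

theorem continuous_wordOrbit [TopologicalSpace X] (hf : ∀ i, Continuous (f i)) (w : ℕ → ι)
    (n : ℕ) : Continuous fun y => wordOrbit f w y n := by
  induction n with
  | zero => exact continuous_id
  | succ n ih => exact (hf (w n)).comp ih

variable (f) in
def hutchinson (S : Set X) : Set X := ⋃ i, f i '' S

theorem wordOrbit_mem_hutchinson_iterate {S : Set X} {y : X} (hy : y ∈ S) (w : ℕ → ι)
    (n : ℕ) : wordOrbit f w y n ∈ (hutchinson f)^[n] S := by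
  induction n with
  | zero => exact hy
  | succ n ih =>
    rw [Function.iterate_succ_apply']
    exact Set.mem_iUnion.2 ⟨w n, Set.mem_image_of_mem _ ih⟩

theorem exists_wordOrbit_eq_of_mem_hutchinson_iterate [Nonempty ι] {S : Set X} {n : ℕ}
    {z : X} (hz : z ∈ (hutchinson f)^[n] S) : ∃ w : ℕ → ι, ∃ y ∈ S, wordOrbit f w y n = z := by
  induction n generalizing z with
  | zero => exact ⟨fun _ => Classical.arbitrary ι, z, hz, rfl⟩
  | succ n ih =>
    rw [Function.iterate_succ_apply'] at hz
    obtain ⟨i, z', hz', rfl⟩ : ∃ i, ∃ z' ∈ (hutchinson f)^[n] S, f i z' = z := by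
      simpa [hutchinson] using hz
    obtain ⟨w, y, hy, rfl⟩ := ih hz'
    refine ⟨Function.update w n i, y, hy, ?_⟩
    rw [wordOrbit, Function.update_self,
      wordOrbit_congr fun j hj => Function.update_of_ne (Nat.ne_of_lt hj) i w]

theorem isCompact_hutchinson_iterate [TopologicalSpace X] [Finite ι]
    (hf : ∀ i, Continuous (f i)) {S : Set X} (hS : IsCompact S) (n : ℕ) :
    IsCompact ((hutchinson f)^[n] S) := by
  induction n with
  | zero => exact hS
  | succ n ih =>
    rw [Function.iterate_succ_apply']
    exact isCompact_iUnion fun i => ih.image (hf i)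

theorem IsCompact.exists_finset_wordOrbit_mem [TopologicalSpace X]
    (hf : ∀ i, Continuous (f i)) {C G : Set X} (hC : IsCompact C) (hG : IsOpen G)
    (h : ∀ y ∈ C, ∃ w n, wordOrbit f w y n ∈ G) :
    ∃ t : Finset ((ℕ → ι) × ℕ), ∀ y ∈ C, ∃ v ∈ t, wordOrbit f v.1 y v.2 ∈ G := by
  obtain ⟨t, ht⟩ := hC.elim_finite_subcover
    (fun v : (ℕ → ι) × ℕ => {y | wordOrbit f v.1 y v.2 ∈ G})
    (fun v => hG.preimage (continuous_wordOrbit hf v.1 v.2))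
    (fun y hy => by simpa using h y hy)
  exact ⟨t, fun y hy => by simpa using ht hy⟩

end WordOrbit

section Attractor

variable {ι X : Type*} [MetricSpace X] [Nonempty ι] [Finite ι] {f : ι → X → X}

theorem hausdorffEDist_hutchinson_iterate_ne_top (hf : ∀ i, Continuous (f i)) {S A : Set X}
    (hS : IsCompact S) (hSne : S.Nonempty) (hA : IsCompact A) (hAne : A.Nonempty) (n : ℕ) :
    hausdorffEDist ((hutchinson f)^[n] S) A ≠ ⊤ :=
  hausdorffEDist_ne_top_of_nonempty_of_bounded
    (hSne.elim fun _ hy =>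
      ⟨_, wordOrbit_mem_hutchinson_iterate hy (fun _ => Classical.arbitrary ι) n⟩)
    hAne (isCompact_hutchinson_iterate hf hS n).isBounded hA.isBounded

variable {A : Set X} {y : X}

theorem eventually_forall_wordOrbit_mem_thickening (hf : ∀ i, Continuous (f i))
    (hA : IsCompact A) (hAne : A.Nonempty)
    (hy : Tendsto (fun k => hausdorffDist ((hutchinson f)^[k] {y}) A) atTop (𝓝 0))
    {ε : ℝ} (hε : 0 < ε) : ∀ᶠ k in atTop, ∀ w, wordOrbit f w y k ∈ thickening ε A := by
  filter_upwards [hy.eventually (gt_mem_nhds hε)] with k hk w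
  obtain ⟨a, ha, hdist⟩ := exists_dist_lt_of_hausdorffDist_lt
    (wordOrbit_mem_hutchinson_iterate (Set.mem_singleton y) w k) hk
    (hausdorffEDist_hutchinson_iterate_ne_top hf isCompact_singleton ⟨y, rfl⟩ hA hAne k)
  exact mem_thickening_iff.2 ⟨a, ha, hdist⟩

theorem exists_wordOrbit_mem_ball (hf : ∀ i, Continuous (f i)) (hA : IsCompact A)
    (hy : Tendsto (fun k => hausdorffDist ((hutchinson f)^[k] {y}) A) atTop (𝓝 0))
    {a : X} (ha : a ∈ A) {ε : ℝ} (hε : 0 < ε) : ∃ w n, wordOrbit f w y n ∈ ball a ε := by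
  obtain ⟨n, hn⟩ := (hy.eventually (gt_mem_nhds hε)).exists
  obtain ⟨z, hz, hdist⟩ := exists_dist_lt_of_hausdorffDist_lt' ha hn
    (hausdorffEDist_hutchinson_iterate_ne_top hf isCompact_singleton ⟨y, rfl⟩ hA ⟨a, ha⟩ n)
  obtain ⟨w, y', rfl, rfl⟩ := exists_wordOrbit_eq_of_mem_hutchinson_iterate hz
  exact ⟨w, n, hdist⟩

end Attractor

section ClusterPoints

variable {X : Type*}

theorem iInter_closure_image_Ici_eq_setOf_mapClusterPt [TopologicalSpace X] (u : ℕ → X) :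
    ⋂ K ≥ 1, closure (u '' Set.Ici K) = {y | MapClusterPt y atTop u} := by
  ext y
  simp only [Set.mem_iInter, Set.mem_ofPred_eq, mapClusterPt_atTop_iff_forall_mem_closure]
  refine ⟨fun h K => ?_, fun h K _ => h K⟩
  exact closure_mono (Set.image_mono (Set.Ici_subset_Ici.2 (le_max_left K 1)))
    (h _ (le_max_right K 1))

theorem IsClosed.mem_of_mapClusterPt_of_eventually_mem_thickening [PseudoMetricSpace X]
    {α : Type*} {l : Filter α} {u : α → X} {A : Set X} (hA : IsClosed A)
    (hu : ∀ ε > 0, ∀ᶠ k in l, u k ∈ thickening ε A) {y : X} (hy : MapClusterPt y l u) :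
    y ∈ A := by
  rw [← hA.closure_eq, closure_eq_iInter_cthickening]
  simp only [Set.mem_iInter]
  exact fun ε hε => isClosed_cthickening.mem_of_mapClusterPt hy
    ((hu ε hε).mono fun k hk => thickening_subset_cthickening ε A hk)

theorem ae_subset_setOf_mapClusterPt [PseudoMetricSpace X] {Ω α : Type*} {m : MeasurableSpace Ω}
    {P : Measure Ω} {l : Filter α} {u : α → Ω → X} {A : Set X} (hA : TopologicalSpace.IsSeparable A)
    (h : ∀ a ∈ A, ∀ ε > 0, ∀ᵐ ω ∂P, ∃ᶠ k in l, u k ω ∈ ball a ε) :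
    ∀ᵐ ω ∂P, A ⊆ {y | MapClusterPt y l (u · ω)} := by
  obtain ⟨D, hDA, hDc, hAD⟩ := hA.exists_countable_dense_subset
  have hD : ∀ᵐ ω ∂P, ∀ d ∈ D, MapClusterPt d l (u · ω) := by
    refine (ae_ball_iff hDc).2 fun d hd => ?_
    simp_rw [nhds_basis_ball_inv_nat_succ.mapClusterPt_iff_frequently, forall_const]
    exact ae_all_iff.2 fun n => h d (hDA hd) _ (by positivity)
  filter_upwards [hD] with ω hω
  exact hAD.trans (closure_minimal hω isClosed_setOfPred_clusterPt)

end ClusterPoints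

section Hitting

variable {Ω : Type*} {m : MeasurableSpace Ω} {P : Measure Ω}

theorem mul_measure_le_measure_inter_of_cover {m' : MeasurableSpace Ω} (hm' : m' ≤ m)
    {α : Type*} {c : ℝ≥0∞} {H : Set Ω} {R : α → Set Ω} (hR : ∀ a, MeasurableSet[m'] (R a))
    (t : Finset α) (h : ∀ a ∈ t, ∀ E, MeasurableSet[m'] E → E ⊆ R a → c * P E ≤ P (E ∩ H))
    {E : Set Ω} (hE : MeasurableSet[m'] E) (hEt : E ⊆ ⋃ a ∈ t, R a) : c * P E ≤ P (E ∩ H) := by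
  classical
  induction t using Finset.induction_on generalizing E with
  | empty => simp [Set.subset_empty_iff.1 (by simpa using hEt)]
  | insert a t _ ih =>
    have hRa := hm' _ (hR a)
    have hrest : E \ R a ⊆ ⋃ b ∈ t, R b := fun ω ⟨hω, hωa⟩ => by
      simpa [hωa] using hEt hω
    calc c * P E = c * P (E ∩ R a) + c * P (E \ R a) := by
          rw [← mul_add, measure_inter_add_sdiff E hRa]
      _ ≤ P (E ∩ R a ∩ H) + P (E \ R a ∩ H) :=
          add_le_add (h a (t.mem_insert_self a) _ (hE.inter (hR a)) Set.inter_subset_right)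
            (ih (fun b hb => h b (Finset.mem_insert_of_mem hb)) (hE.diff (hR a)) hrest)
      _ = P (E ∩ H) := by
          rw [Set.inter_right_comm, Set.sdiff_inter_right_comm, measure_inter_add_sdiff _ hRa]

variable [IsFiniteMeasure P] (ℱ : Filtration ℕ m) {H : ℕ → Set Ω} {c : ℝ≥0∞} {M K₀ : ℕ}

theorem measure_setOf_forall_ge_notMem_eq_zero (hH : ∀ k, MeasurableSet[ℱ k] (H k))
    (hc : c ≠ 0)
    (hhit : ∀ T ≥ K₀, ∀ E, MeasurableSet[ℱ T] E →
      c * P E ≤ P (E ∩ ⋃ k ∈ Set.Icc T (T + M), H k))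
    {K : ℕ} (hK : K₀ ≤ K) : P {ω | ∀ k ≥ K, ω ∉ H k} = 0 := by
  set D : ℕ → Set Ω := fun j => ⋂ k ∈ Set.Icc K (K + j * M), (H k)ᶜ
  have hD : ∀ j, MeasurableSet[ℱ (K + j * M)] (D j) := fun j =>
    .biInter (Set.to_countable _) fun k hk => (ℱ.mono hk.2 _ (hH k)).compl
  have hstep : ∀ j, P (D (j + 1)) ≤ (1 - c) * P (D j) := by
    intro j
    set hit := ⋃ k ∈ Set.Icc (K + j * M) (K + j * M + M), H k
    have hhit_meas : MeasurableSet hit :=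
      .biUnion (Set.to_countable _) fun k _ => ℱ.le k _ (hH k)
    have hsub : D (j + 1) ⊆ D j \ hit := by
      intro ω hω
      simp only [D, hit, Set.mem_iInter, Set.mem_sdiff, Set.mem_iUnion, Set.mem_Icc,
        Set.mem_compl_iff, show K + (j + 1) * M = K + j * M + M by ring] at hω ⊢
      exact ⟨fun k hk => hω k ⟨hk.1, by omega⟩, fun ⟨k, hk, hkH⟩ => hω k ⟨by omega, hk.2⟩ hkH⟩
    calc P (D (j + 1)) ≤ P (D j \ hit) := measure_mono hsub
      _ = P (D j) - P (D j ∩ hit) :=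
          ENNReal.eq_sub_of_add_eq (measure_ne_top _ _) (measure_sdiff_add_inter _ hhit_meas)
      _ ≤ P (D j) - c * P (D j) :=
          tsub_le_tsub_left (hhit _ (hK.trans (Nat.le_add_right _ _)) _ (hD j)) _
      _ = (1 - c) * P (D j) := by
          rw [ENNReal.sub_mul fun _ _ => measure_ne_top _ _, one_mul]
  have hgeom : ∀ j, P (D j) ≤ (1 - c) ^ j * P (D 0) := by
    intro j
    induction j with
    | zero => simp
    | succ j ih =>
      calc P (D (j + 1)) ≤ (1 - c) * P (D j) := hstep j
        _ ≤ (1 - c) * ((1 - c) ^ j * P (D 0)) := by gcongr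
        _ = (1 - c) ^ (j + 1) * P (D 0) := by ring
  have hlim : Tendsto (fun j => (1 - c) ^ j * P (D 0)) atTop (𝓝 0) := by
    simpa using ENNReal.Tendsto.mul_const (ENNReal.tendsto_pow_atTop_nhds_zero_of_lt_one
      (ENNReal.sub_lt_self ENNReal.one_ne_top one_ne_zero hc)) (.inr (measure_ne_top P (D 0)))
  refine le_antisymm (ge_of_tendsto' hlim fun j => ?_) zero_le
  refine (measure_mono fun ω hω => ?_).trans (hgeom j)
  simp only [D, Set.mem_iInter, Set.mem_compl_iff]
  exact fun k hk => hω k hk.1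

theorem ae_frequently_mem_of_uniform_hitting (hH : ∀ k, MeasurableSet[ℱ k] (H k))
    (hc : c ≠ 0)
    (hhit : ∀ T ≥ K₀, ∀ E, MeasurableSet[ℱ T] E →
      c * P E ≤ P (E ∩ ⋃ k ∈ Set.Icc T (T + M), H k)) :
    ∀ᵐ ω ∂P, ∃ᶠ k in atTop, ω ∈ H k := by
  simp_rw [frequently_atTop]
  refine ae_all_iff.2 fun K => ae_iff.2 <| measure_mono_null ?_
    (measure_setOf_forall_ge_notMem_eq_zero ℱ hH hc hhit (le_max_right K K₀))
  intro ω hω k hk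
  simp only [Set.mem_ofPred_eq, not_exists, not_and] at hω
  exact hω k ((le_max_left K K₀).trans hk)

end Hitting

section RandomWords

variable {Ω ι : Type*} {m : MeasurableSpace Ω} {P : Measure Ω} (σ : ℕ → Ω → ι)

theorem pow_mul_measure_le_measure_cylinder_inter (ℱ : Filtration ℕ m)
    (hσ : ∀ j i, MeasurableSet[ℱ (j + 1)] {ω | σ j ω = i}) {c : ℝ≥0∞}
    (hcond : ∀ k i E, MeasurableSet[ℱ k] E → c * P E ≤ P ({ω | σ k ω = i} ∩ E))
    (w : ℕ → ι) (t : ℕ) {E : Set Ω} (hE : MeasurableSet[ℱ t] E) (n : ℕ) :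
    c ^ n * P E ≤ P ({ω | ∀ r < n, σ (t + r) ω = w r} ∩ E) := by
  induction n with
  | zero => simp
  | succ n ih =>
    have hcyl : {ω | ∀ r < n + 1, σ (t + r) ω = w r}
        = {ω | σ (t + n) ω = w n} ∩ {ω | ∀ r < n, σ (t + r) ω = w r} := by
      ext ω
      simp only [Set.mem_ofPred_eq, Set.mem_inter_iff, Nat.forall_lt_succ_right, and_comm]
    have hmeas : MeasurableSet[ℱ (t + n)] ({ω | ∀ r < n, σ (t + r) ω = w r} ∩ E) := by
      refine .inter ?_ (ℱ.mono (Nat.le_add_right t n) _ hE)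
      simp only [Set.ofPred_forall]
      exact .iInter fun r => .iInter fun hr => ℱ.mono (by omega) _ (hσ (t + r) (w r))
    calc c ^ (n + 1) * P E = c * (c ^ n * P E) := by ring
      _ ≤ c * P ({ω | ∀ r < n, σ (t + r) ω = w r} ∩ E) := by gcongr
      _ ≤ P ({ω | ∀ r < n + 1, σ (t + r) ω = w r} ∩ E) := by
          rw [hcyl, Set.inter_assoc]; exact hcond _ _ _ hmeas

variable [MeasurableSpace ι] [Countable ι] [MeasurableSingletonClass ι]

def prefixFiltration (hσ : ∀ k, Measurable (σ k)) : Filtration ℕ m where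
  seq k := ⨆ j : Fin k, MeasurableSpace.comap (σ j) ⊤
  mono' _ _ hkl := iSup_le fun j => le_iSup_of_le (Fin.castLE hkl j) le_rfl
  le' _ := iSup_le fun j => by
    rintro _ ⟨S, -, rfl⟩
    exact hσ j (Set.to_countable S).measurableSet

variable {σ} (hσ : ∀ k, Measurable (σ k))

theorem measurableSet_prefixFiltration_preimage {β : Type*} {k : ℕ} {g : Ω → β}
    (hg : ∀ ω ω', (∀ j < k, σ j ω = σ j ω') → g ω = g ω') (S : Set β) :
    MeasurableSet[prefixFiltration σ hσ k] (g ⁻¹' S) := by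
  set π : Ω → Fin k → ι := fun ω j => σ j ω
  have hπ : Measurable[prefixFiltration σ hσ k] π :=
    @measurable_pi_lambda _ _ _ (prefixFiltration σ hσ k) _ _ fun j =>
      .of_comap_le ((MeasurableSpace.comap_mono le_top).trans
        (le_iSup (fun j : Fin k => MeasurableSpace.comap (σ j) ⊤) j))
  have hfactor : g ⁻¹' S = π ⁻¹' (π '' (g ⁻¹' S)) := by
    refine (Set.subset_preimage_image π _).antisymm ?_
    rintro ω ⟨ω', hω', hπω⟩
    rwa [Set.mem_preimage, ← hg ω' ω fun j hj => congrFun hπω ⟨j, hj⟩]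
  rw [hfactor]
  exact hπ (Set.to_countable _).measurableSet

theorem measurableSet_prefixFiltration_eq (j : ℕ) (i : ι) :
    MeasurableSet[prefixFiltration σ hσ (j + 1)] {ω | σ j ω = i} :=
  measurableSet_prefixFiltration_preimage hσ (fun _ _ h => h j j.lt_succ_self) {i}

theorem measurableSet_prefixFiltration_wordOrbit {X : Type*} (f : ι → X → X) (x₀ : X) (k : ℕ)
    (S : Set X) : MeasurableSet[prefixFiltration σ hσ k] {ω | wordOrbit f (σ · ω) x₀ k ∈ S} :=
  measurableSet_prefixFiltration_preimage hσ (fun _ _ h => wordOrbit_congr h x₀) S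

end RandomWords

section ChaosGame

variable {Ω ι X : Type*} {m : MeasurableSpace Ω} {P : Measure Ω} {f : ι → X → X}
  {σ : ℕ → Ω → ι} {x₀ : X} (ℱ : Filtration ℕ m) {c : ℝ≥0∞}

theorem pow_mul_measure_le_measure_inter_hit
    (hσ : ∀ j i, MeasurableSet[ℱ (j + 1)] {ω | σ j ω = i}) (hc : c ≤ 1)
    (hcond : ∀ k i E, MeasurableSet[ℱ k] E → c * P E ≤ P ({ω | σ k ω = i} ∩ E))
    (hx : ∀ k (S : Set X), MeasurableSet[ℱ k] {ω | wordOrbit f (σ · ω) x₀ k ∈ S})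
    {C G : Set X} {t : Finset ((ℕ → ι) × ℕ)}
    (ht : ∀ y ∈ C, ∃ v ∈ t, wordOrbit f v.1 y v.2 ∈ G) {T : ℕ}
    (hT : ∀ ω, wordOrbit f (σ · ω) x₀ T ∈ C) {E : Set Ω} (hE : MeasurableSet[ℱ T] E) :
    c ^ t.sup Prod.snd * P E ≤
      P (E ∩ ⋃ k ∈ Set.Icc T (T + t.sup Prod.snd), {ω | wordOrbit f (σ · ω) x₀ k ∈ G}) := by
  refine mul_measure_le_measure_inter_of_cover (ℱ.le T)
    (R := fun v : (ℕ → ι) × ℕ => {ω | wordOrbit f v.1 (wordOrbit f (σ · ω) x₀ T) v.2 ∈ G})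
    (fun v => hx T {y | wordOrbit f v.1 y v.2 ∈ G}) t (fun v hv E' hE' hE'v => ?_) hE
    (fun ω _ => by simpa using ht _ (hT ω))
  have hlen : v.2 ≤ t.sup Prod.snd := Finset.le_sup hv
  calc c ^ t.sup Prod.snd * P E' ≤ c ^ v.2 * P E' := by
        gcongr ?_ * _; exact pow_le_pow_right_of_le_one' hc hlen
    _ ≤ P ({ω | ∀ r < v.2, σ (T + r) ω = v.1 r} ∩ E') :=
        pow_mul_measure_le_measure_cylinder_inter σ ℱ hσ hcond v.1 T hE' v.2
    _ ≤ _ := by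
        refine measure_mono fun ω ⟨hcyl, hω⟩ =>
          ⟨hω, Set.mem_biUnion (x := T + v.2) ⟨by omega, by omega⟩ ?_⟩
        rw [Set.mem_ofPred_eq, wordOrbit_add, wordOrbit_congr hcyl]
        exact hE'v hω

theorem ae_frequently_wordOrbit_mem [IsProbabilityMeasure P] [Nonempty ι] [TopologicalSpace X]
    (hf : ∀ i, Continuous (f i)) (hσ : ∀ j i, MeasurableSet[ℱ (j + 1)] {ω | σ j ω = i})
    (hcond : ∀ k i E, MeasurableSet[ℱ k] E → c * P E ≤ P ({ω | σ k ω = i} ∩ E)) (hc : c ≠ 0)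
    (hx : ∀ k (S : Set X), MeasurableSet[ℱ k] {ω | wordOrbit f (σ · ω) x₀ k ∈ S})
    {C G : Set X} (hC : IsCompact C) (hG : IsOpen G)
    (hreach : ∀ y ∈ C, ∃ w n, wordOrbit f w y n ∈ G) {K₀ : ℕ}
    (hK₀ : ∀ k ≥ K₀, ∀ ω, wordOrbit f (σ · ω) x₀ k ∈ C) :
    ∀ᵐ ω ∂P, ∃ᶠ k in atTop, wordOrbit f (σ · ω) x₀ k ∈ G := by
  have hc1 : c ≤ 1 := by
    simpa using (hcond 0 (Classical.arbitrary ι) Set.univ MeasurableSet.univ).trans prob_le_one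
  obtain ⟨t, ht⟩ := hC.exists_finset_wordOrbit_mem hf hG hreach
  exact ae_frequently_mem_of_uniform_hitting ℱ (fun k => hx k G) (pow_ne_zero _ hc)
    fun T hT E hE => pow_mul_measure_le_measure_inter_hit ℱ hσ hc1 hcond hx ht (hK₀ T hT) hE

end ChaosGame

theorem chaos_game_iInter_closure_general {X : Type*} [MetricSpace X] [ProperSpace X]
    {N : ℕ} (f : Fin N → X → X) (hf : ∀ i, Continuous (f i))
    (F : Set X → Set X) (hF : ∀ S : Set X, F S = ⋃ i, f i '' S)
    (A : Set X) (hA : A.Nonempty) (hAc : IsCompact A)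
    (U : Set X) (hU : IsOpen U) (hAU : A ⊆ U)
    (hattr : ∀ B : Set X, B.Nonempty → IsCompact B → B ⊆ U →
      Tendsto (fun k => hausdorffDist (F^[k] B) A) atTop (𝓝 0))
    (p : ℝ) (hp : 0 < p)
    (x₀ : X) (hx₀ : x₀ ∈ U)
    {Ω : Type*} [MeasurableSpace Ω] (P : Measure Ω) [IsProbabilityMeasure P]
    (σ : ℕ → Ω → Fin N) (hσ : ∀ k, Measurable (σ k))
    (hcond : ∀ (k : ℕ) (n : Fin N) (E : Set Ω),
      MeasurableSet[⨆ j : Fin k, MeasurableSpace.comap (σ (j : ℕ)) ⊤] E →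
      ENNReal.ofReal p * P E ≤ P ({ω | σ k ω = n} ∩ E))
    (x : ℕ → Ω → X) (hx0 : ∀ ω, x 0 ω = x₀)
    (hxk : ∀ (k : ℕ) (ω : Ω), x (k + 1) ω = f (σ k ω) (x k ω)) :
    ∀ᵐ ω ∂P, ⋂ K ≥ 1, closure ((fun k => x k ω) '' Set.Ici K) = A := by
  obtain rfl : F = hutchinson f := funext hF
  obtain rfl : x = fun k ω => wordOrbit f (σ · ω) x₀ k := by
    funext k ω
    induction k with
    | zero => exact hx0 ω
    | succ k ih => rw [hxk, ih]; rfl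
  have : Nonempty (Fin N) := ⟨σ 0 (nonempty_of_isProbabilityMeasure P).some⟩
  have hnear : ∀ ε > 0, ∀ᶠ k in atTop, ∀ w, wordOrbit f w x₀ k ∈ thickening ε A :=
    fun ε hε => eventually_forall_wordOrbit_mem_thickening hf hAc hA
      (hattr {x₀} (Set.singleton_nonempty x₀) isCompact_singleton
        (Set.singleton_subset_iff.2 hx₀)) hε
  obtain ⟨ε₀, hε₀, hCU⟩ := hAc.exists_cthickening_subset_open hU hAU
  obtain ⟨K₀, hK₀⟩ := (hnear ε₀ hε₀).exists_forall_of_atTop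
  have hvisit : ∀ a ∈ A, ∀ ε > 0, ∀ᵐ ω ∂P, ∃ᶠ k in atTop, wordOrbit f (σ · ω) x₀ k ∈ ball a ε :=
    fun a ha ε hε => ae_frequently_wordOrbit_mem (prefixFiltration σ hσ) hf
      (measurableSet_prefixFiltration_eq hσ) hcond (ENNReal.ofReal_pos.2 hp).ne'
      (measurableSet_prefixFiltration_wordOrbit hσ f x₀) hAc.cthickening isOpen_ball
      (fun y hy => exists_wordOrbit_mem_ball hf hAc (hattr {y} (Set.singleton_nonempty y)
        isCompact_singleton (Set.singleton_subset_iff.2 (hCU hy))) ha hε)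
      fun k hk ω => thickening_subset_cthickening _ _ (hK₀ k hk _)
  filter_upwards [ae_subset_setOf_mapClusterPt hAc.isSeparable hvisit] with ω hω
  rw [iInter_closure_image_Ici_eq_setOf_mapClusterPt]
  exact subset_antisymm (fun y hy => hAc.isClosed.mem_of_mapClusterPt_of_eventually_mem_thickening
    (fun ε hε => (hnear ε hε).mono fun k hk => hk _) hy) hω

/-- Chaos game, set-theoretic form. Under the hypotheses of the chaos game theorem
(proper complete `X`, IFS of continuous maps with Hutchinson operator `F`, attractor `A`
with `F A = A` whose basin contains the open `U`, `p ∈ (0, 1/N]`, random selections `σ`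
choosing each index with conditional probability at least `p` given the past, and random
orbit `x (k+1) = f (σ k) (x k)` started at `x₀ ∈ U`), almost surely
`⋂_{K ≥ 1} closure {x k : k ≥ K} = A`. -/
theorem chaos_game_iInter_closure {X : Type*} [MetricSpace X] [ProperSpace X]
    [CompleteSpace X]
    {N : ℕ} (f : Fin N → X → X) (hf : ∀ i, Continuous (f i))
    (F : Set X → Set X) (hF : ∀ S : Set X, F S = ⋃ i, f i '' S)
    (A : Set X) (hA : A.Nonempty) (hAc : IsCompact A) (hfix : F A = A)
    (U : Set X) (hU : IsOpen U) (hAU : A ⊆ U)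
    (hattr : ∀ B : Set X, B.Nonempty → IsCompact B → B ⊆ U →
      Tendsto (fun k => hausdorffDist (F^[k] B) A) atTop (𝓝 0))
    (p : ℝ) (hp : 0 < p) (hpN : p ≤ 1 / N)
    (x₀ : X) (hx₀ : x₀ ∈ U)
    {Ω : Type*} [MeasurableSpace Ω] (P : Measure Ω) [IsProbabilityMeasure P]
    (σ : ℕ → Ω → Fin N) (hσ : ∀ k, Measurable (σ k))
    (hcond : ∀ (k : ℕ) (n : Fin N) (E : Set Ω),
      MeasurableSet[⨆ j : Fin k, MeasurableSpace.comap (σ (j : ℕ)) ⊤] E →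
      ENNReal.ofReal p * P E ≤ P ({ω | σ k ω = n} ∩ E))
    (x : ℕ → Ω → X) (hx0 : ∀ ω, x 0 ω = x₀)
    (hxk : ∀ (k : ℕ) (ω : Ω), x (k + 1) ω = f (σ k ω) (x k ω)) :
    ∀ᵐ ω ∂P, ⋂ K ≥ 1, closure ((fun k => x k ω) '' Set.Ici K) = A :=
  chaos_game_iInter_closure_general f hf F hF A hA hAc U hU hAU hattr p hp x₀ hx₀ P σ hσ hcond x hx0
    hxk
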